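/- arXiv:0807.1669 — 4 statements merged into one kernel-verified Lean document; each statement's English description precedes it below -/
import Mathlib

section
/- Let μ(x)=(ax+b)/(cx+d) be a Möbius map bounded on [-1,1], and let φ(x) = (φ₀₀ x + φ₀₁)/(φ₁₀ x + φ₁₁) with φ ∈ {L, R, M}, where L(x)=(x-1)/(x+3), R(x)=(x+1)/(-x+3), M(x)=x/3, so that the denominator of φ is nonzero and of constant sign on [-1,1]. Then the inclusion μ([-1,1]) ⊆ φ([-1,1]) (i.e. μ(r) ∈ φ([-1,1]) for all r ∈ [-1,1]) is equivalent to the four rational inequalities: (d-c)(d-c)(φ₀₁-φ₀₀) ≤ (d-c)(b-a)(φ₁₁-φ₁₀), (d-c)(b-a)(φ₁₀+φ₁₁) ≤ (d-c)(d-c)(φ₀₀+φ₀₁), (d+c)(c+d)(φ₀₁-φ₀₀) ≤ (d+c)(a+b)(φ₁₁-φ₁₀), and (d+c)(a+b)(φ₁₀+φ₁₁) ≤ (d+c)(c+d)(φ₀₀+φ₀₁). -/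
lemma denomSign (c d : ℝ) (hμb : ∀ x ∈ Set.Icc (-1 : ℝ) 1, c * x + d ≠ 0) :
    (∀ x ∈ Set.Icc (-1 : ℝ) 1, 0 < c * x + d) ∨
    (∀ x ∈ Set.Icc (-1 : ℝ) 1, c * x + d < 0) := by
  have h1 : c * (-1) + d ≠ 0 := hμb (-1) (by norm_num)
  have h2 : c * 1 + d ≠ 0 := hμb 1 (by norm_num)
  have hdc : d - c ≠ 0 := by intro h; apply h1; linarith
  have hcd : c + d ≠ 0 := by intro h; apply h2; linarith
  rcases lt_or_gt_of_ne hdc with hdc | hdc <;>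
  rcases lt_or_gt_of_ne hcd with hcd | hcd
  · -- both negative
    right
    intro x hx
    rw [Set.mem_Icc] at hx
    rcases le_or_gt x 0 with hx0 | hx0
    · nlinarith [mul_nonneg (show (0:ℝ) ≤ -x by linarith) (show (0:ℝ) ≤ c - d by linarith),
        mul_nonneg (show (0:ℝ) ≤ 1 + x by linarith) (show (0:ℝ) ≤ -(c+d) by linarith)]
    · nlinarith [mul_nonneg (show (0:ℝ) ≤ x by linarith) (show (0:ℝ) ≤ -(c+d) by linarith),
        mul_nonneg (show (0:ℝ) ≤ 1 - x by linarith) (show (0:ℝ) ≤ c - d by linarith)]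
  · -- d - c < 0, 0 < c + d : c > 0, root -d/c in [-1,1]
    exfalso
    have hc : 0 < c := by linarith
    have hx0 : -d / c ∈ Set.Icc (-1 : ℝ) 1 := by
      rw [Set.mem_Icc]
      constructor
      · rw [le_div_iff₀ hc]; linarith
      · rw [div_le_iff₀ hc]; linarith
    have hc0 : c ≠ 0 := ne_of_gt hc
    exact hμb (-d/c) hx0 (by field_simp; ring)
  · -- 0 < d - c, c + d < 0 : c < 0
    exfalso
    have hc : c < 0 := by linarith
    have hx0 : -d / c ∈ Set.Icc (-1 : ℝ) 1 := by
      rw [Set.mem_Icc]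
      constructor
      · rw [le_div_iff_of_neg hc]; linarith
      · rw [div_le_iff_of_neg hc]; linarith
    have hc0 : c ≠ 0 := ne_of_lt hc
    exact hμb (-d/c) hx0 (by field_simp; ring)
  · left
    intro x hx
    rw [Set.mem_Icc] at hx
    rcases le_or_gt x 0 with hx0 | hx0
    · nlinarith [mul_nonneg (show (0:ℝ) ≤ -x by linarith) (show (0:ℝ) ≤ d - c by linarith),
        mul_nonneg (show (0:ℝ) ≤ 1 + x by linarith) (show (0:ℝ) ≤ c + d by linarith)]
    · nlinarith [mul_nonneg (show (0:ℝ) ≤ x by linarith) (show (0:ℝ) ≤ c + d by linarith),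
        mul_nonneg (show (0:ℝ) ≤ 1 - x by linarith) (show (0:ℝ) ≤ d - c by linarith)]

lemma key_pos (a b c d lo hi : ℝ)
    (hd : ∀ x ∈ Set.Icc (-1 : ℝ) 1, 0 < c * x + d) :
    (∀ r ∈ Set.Icc (-1 : ℝ) 1, (a * r + b) / (c * r + d) ∈ Set.Icc lo hi) ↔
    (lo * (d - c) ≤ b - a ∧ b - a ≤ hi * (d - c) ∧
     lo * (c + d) ≤ a + b ∧ a + b ≤ hi * (c + d)) := by
  have h1 : 0 < d - c := by have := hd (-1) (by norm_num); linarith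
  have h2 : 0 < c + d := by have := hd 1 (by norm_num); linarith
  constructor
  · intro h
    have hm1 := h (-1) (by norm_num)
    have hp1 := h 1 (by norm_num)
    rw [Set.mem_Icc] at hm1 hp1
    rw [show a * (-1) + b = b - a by ring, show c * (-1) + d = d - c by ring] at hm1
    rw [show a * 1 + b = a + b by ring, show c * 1 + d = c + d by ring] at hp1
    rw [le_div_iff₀ h1] at hm1
    rw [div_le_iff₀ h1] at hm1
    rw [le_div_iff₀ h2] at hp1
    rw [div_le_iff₀ h2] at hp1
    exact ⟨by linarith [hm1.1], by linarith [hm1.2], by linarith [hp1.1], by linarith [hp1.2]⟩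
  · rintro ⟨A1, A2, A3, A4⟩ r hr
    rw [Set.mem_Icc] at hr
    have hdr := hd r (Set.mem_Icc.mpr hr)
    rw [Set.mem_Icc]
    constructor
    · rw [le_div_iff₀ hdr]
      nlinarith [mul_nonneg (show (0:ℝ) ≤ 1 - r by linarith) (show (0:ℝ) ≤ (b - a) - lo * (d - c) by linarith),
        mul_nonneg (show (0:ℝ) ≤ 1 + r by linarith) (show (0:ℝ) ≤ (a + b) - lo * (c + d) by linarith)]
    · rw [div_le_iff₀ hdr]
      nlinarith [mul_nonneg (show (0:ℝ) ≤ 1 - r by linarith) (show (0:ℝ) ≤ hi * (d - c) - (b - a) by linarith),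
        mul_nonneg (show (0:ℝ) ≤ 1 + r by linarith) (show (0:ℝ) ≤ hi * (c + d) - (a + b) by linarith)]

lemma key_neg (a b c d lo hi : ℝ)
    (hd : ∀ x ∈ Set.Icc (-1 : ℝ) 1, c * x + d < 0) :
    (∀ r ∈ Set.Icc (-1 : ℝ) 1, (a * r + b) / (c * r + d) ∈ Set.Icc lo hi) ↔
    (b - a ≤ lo * (d - c) ∧ hi * (d - c) ≤ b - a ∧
     a + b ≤ lo * (c + d) ∧ hi * (c + d) ≤ a + b) := by
  have h1 : d - c < 0 := by have := hd (-1) (by norm_num); linarith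
  have h2 : c + d < 0 := by have := hd 1 (by norm_num); linarith
  constructor
  · intro h
    have hm1 := h (-1) (by norm_num)
    have hp1 := h 1 (by norm_num)
    rw [Set.mem_Icc] at hm1 hp1
    rw [show a * (-1) + b = b - a by ring, show c * (-1) + d = d - c by ring] at hm1
    rw [show a * 1 + b = a + b by ring, show c * 1 + d = c + d by ring] at hp1
    rw [le_div_iff_of_neg h1] at hm1
    rw [div_le_iff_of_neg h1] at hm1
    rw [le_div_iff_of_neg h2] at hp1
    rw [div_le_iff_of_neg h2] at hp1
    exact ⟨by linarith [hm1.1], by linarith [hm1.2], by linarith [hp1.1], by linarith [hp1.2]⟩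
  · rintro ⟨A1, A2, A3, A4⟩ r hr
    rw [Set.mem_Icc] at hr
    have hdr := hd r (Set.mem_Icc.mpr hr)
    rw [Set.mem_Icc]
    constructor
    · rw [le_div_iff_of_neg hdr]
      nlinarith [mul_nonneg (show (0:ℝ) ≤ 1 - r by linarith) (show (0:ℝ) ≤ lo * (d - c) - (b - a) by linarith),
        mul_nonneg (show (0:ℝ) ≤ 1 + r by linarith) (show (0:ℝ) ≤ lo * (c + d) - (a + b) by linarith)]
    · rw [div_le_iff_of_neg hdr]
      nlinarith [mul_nonneg (show (0:ℝ) ≤ 1 - r by linarith) (show (0:ℝ) ≤ (b - a) - hi * (d - c) by linarith),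
        mul_nonneg (show (0:ℝ) ≤ 1 + r by linarith) (show (0:ℝ) ≤ (a + b) - hi * (c + d) by linarith)]

lemma imgL : (fun x : ℝ => (1 * x + -1) / (1 * x + 3)) '' Set.Icc (-1 : ℝ) 1
    = Set.Icc (-1 : ℝ) 0 := by
  ext y
  simp only [Set.mem_image, Set.mem_Icc]
  constructor
  · rintro ⟨x, ⟨hx1, hx2⟩, rfl⟩
    have hx3 : 0 < 1 * x + 3 := by linarith
    constructor
    · rw [le_div_iff₀ hx3]; linarith
    · rw [div_le_iff₀ hx3]; linarith
  · rintro ⟨hy1, hy2⟩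
    have h1y : (0:ℝ) < 1 - y := by linarith
    have h1y' : (1:ℝ) - y ≠ 0 := ne_of_gt h1y
    refine ⟨(3 * y + 1) / (1 - y), ⟨?_, ?_⟩, ?_⟩
    · rw [le_div_iff₀ h1y]; linarith
    · rw [div_le_iff₀ h1y]; linarith
    · field_simp
      ring

lemma imgR : (fun x : ℝ => (1 * x + 1) / (-1 * x + 3)) '' Set.Icc (-1 : ℝ) 1
    = Set.Icc (0 : ℝ) 1 := by
  ext y
  simp only [Set.mem_image, Set.mem_Icc]
  constructor
  · rintro ⟨x, ⟨hx1, hx2⟩, rfl⟩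
    have hx3 : 0 < -1 * x + 3 := by linarith
    constructor
    · rw [le_div_iff₀ hx3]; linarith
    · rw [div_le_iff₀ hx3]; linarith
  · rintro ⟨hy1, hy2⟩
    have h1y : (0:ℝ) < y + 1 := by linarith
    have h1y' : y + (1:ℝ) ≠ 0 := ne_of_gt h1y
    refine ⟨(3 * y - 1) / (y + 1), ⟨?_, ?_⟩, ?_⟩
    · rw [le_div_iff₀ h1y]; linarith
    · rw [div_le_iff₀ h1y]; linarith
    · field_simp
      ring

lemma imgM : (fun x : ℝ => (1 * x + 0) / (0 * x + 3)) '' Set.Icc (-1 : ℝ) 1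
    = Set.Icc (-(1/3) : ℝ) (1/3) := by
  ext y
  simp only [Set.mem_image, Set.mem_Icc]
  constructor
  · rintro ⟨x, ⟨hx1, hx2⟩, rfl⟩
    constructor <;> [rw [le_div_iff₀ (by norm_num : (0:ℝ) < 0 * x + 3)]; rw [div_le_iff₀ (by norm_num : (0:ℝ) < 0 * x + 3)]] <;> linarith
  · rintro ⟨hy1, hy2⟩
    exact ⟨3 * y, ⟨by linarith, by linarith⟩, by norm_num⟩

theorem emission_condition_iff (a b c d p00 p01 p10 p11 : ℝ)
    (hφ : (p00, p01, p10, p11) = ((1 : ℝ), -1, 1, 3) ∨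
          (p00, p01, p10, p11) = ((1 : ℝ), 1, -1, 3) ∨
          (p00, p01, p10, p11) = ((1 : ℝ), 0, 0, 3))
    (hμb : ∀ x ∈ Set.Icc (-1 : ℝ) 1, c * x + d ≠ 0)
    (hsign : (∀ x ∈ Set.Icc (-1 : ℝ) 1, 0 < p10 * x + p11) ∨
             (∀ x ∈ Set.Icc (-1 : ℝ) 1, p10 * x + p11 < 0)) :
    (∀ r ∈ Set.Icc (-1 : ℝ) 1,
        (a * r + b) / (c * r + d) ∈
          (fun x => (p00 * x + p01) / (p10 * x + p11)) '' Set.Icc (-1 : ℝ) 1) ↔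
      ((d - c) * (d - c) * (p01 - p00) ≤ (d - c) * (b - a) * (p11 - p10) ∧
       (d - c) * (b - a) * (p10 + p11) ≤ (d - c) * (d - c) * (p00 + p01) ∧
       (d + c) * (c + d) * (p01 - p00) ≤ (d + c) * (a + b) * (p11 - p10) ∧
       (d + c) * (a + b) * (p10 + p11) ≤ (d + c) * (c + d) * (p00 + p01)) := by
  rcases hφ with h | h | h <;>
    (simp only [Prod.mk.injEq] at h; obtain ⟨rfl, rfl, rfl, rfl⟩ := h) <;>
    clear hsign <;>
    rcases denomSign c d hμb with hs | hs
  · rw [imgL, key_pos a b c d (-1) 0 hs]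
    have h1 : 0 < d - c := by have := hs (-1) (by norm_num); linarith
    have h2 : 0 < c + d := by have := hs 1 (by norm_num); linarith
    constructor <;> rintro ⟨q1, q2, q3, q4⟩ <;>
      exact ⟨by nlinarith, by nlinarith, by nlinarith, by nlinarith⟩
  · rw [imgL, key_neg a b c d (-1) 0 hs]
    have h1 : d - c < 0 := by have := hs (-1) (by norm_num); linarith
    have h2 : c + d < 0 := by have := hs 1 (by norm_num); linarith
    constructor <;> rintro ⟨q1, q2, q3, q4⟩ <;>
      exact ⟨by nlinarith, by nlinarith, by nlinarith, by nlinarith⟩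
  · rw [imgR, key_pos a b c d 0 1 hs]
    have h1 : 0 < d - c := by have := hs (-1) (by norm_num); linarith
    have h2 : 0 < c + d := by have := hs 1 (by norm_num); linarith
    constructor <;> rintro ⟨q1, q2, q3, q4⟩ <;>
      exact ⟨by nlinarith, by nlinarith, by nlinarith, by nlinarith⟩
  · rw [imgR, key_neg a b c d 0 1 hs]
    have h1 : d - c < 0 := by have := hs (-1) (by norm_num); linarith
    have h2 : c + d < 0 := by have := hs 1 (by norm_num); linarith
    constructor <;> rintro ⟨q1, q2, q3, q4⟩ <;>
      exact ⟨by nlinarith, by nlinarith, by nlinarith, by nlinarith⟩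
  · rw [imgM, key_pos a b c d (-(1/3)) (1/3) hs]
    have h1 : 0 < d - c := by have := hs (-1) (by norm_num); linarith
    have h2 : 0 < c + d := by have := hs 1 (by norm_num); linarith
    constructor <;> rintro ⟨q1, q2, q3, q4⟩ <;>
      exact ⟨by nlinarith, by nlinarith, by nlinarith, by nlinarith⟩
  · rw [imgM, key_neg a b c d (-(1/3)) (1/3) hs]
    have h1 : d - c < 0 := by have := hs (-1) (by norm_num); linarith
    have h2 : c + d < 0 := by have := hs 1 (by norm_num); linarith
    constructor <;> rintro ⟨q1, q2, q3, q4⟩ <;>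
      exact ⟨by nlinarith, by nlinarith, by nlinarith, by nlinarith⟩
end

section
/- Let μ be a refining Möbius map (maps [-1,1] into itself, denominator nonzero on [-1,1]) and define diam(μ) = |μ(-1) - μ(1)|. If diam(μ) < 1/3, then there exists φ ∈ {L, R, M} such that μ([-1,1]) ⊆ φ([-1,1]), where L(x)=(x-1)/(x+3), R(x)=(x+1)/(-x+3), M(x)=x/3. -/
noncomputable def digitL : ℝ → ℝ := fun x => (x - 1) / (x + 3)
noncomputable def digitR : ℝ → ℝ := fun x => (x + 1) / (-x + 3)
noncomputable def digitM : ℝ → ℝ := fun x => x / 3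

/-!
A Möbius map whose denominator does not vanish on `[-1, 1]` is monotone there, so it maps
`[-1, 1]` onto the interval between its values at `±1`. That interval lies in `[-1, 1]` and has
length `< 1/3`, so it lies in `[-1, 0]` or in `[0, 1]`, or else it contains `0` and hence lies in
`[-1/3, 1/3]`. These are the images of `[-1, 1]` under `L`, `R` and `M`.
-/

open Set

theorem IsPreconnected.mul_pos_of_forall_ne_zero {X : Type*} [TopologicalSpace X] {s : Set X}
    (hs : IsPreconnected s) {g : X → ℝ} (hg : ContinuousOn g s) (h0 : ∀ x ∈ s, g x ≠ 0)
    {x y : X} (hx : x ∈ s) (hy : y ∈ s) : 0 < g x * g y := by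
  by_contra! hneg
  have hzero : (0 : ℝ) ∈ g '' s := by
    rcases le_total (g x) (g y) with hle | hle
    · exact hs.intermediate_value hx hy hg ⟨by nlinarith, by nlinarith⟩
    · exact hs.intermediate_value hy hx hg ⟨by nlinarith, by nlinarith⟩
  obtain ⟨z, hz, hgz⟩ := hzero
  exact h0 z hz hgz

section Mobius

variable {a b c d : ℝ}

theorem mobius_sub_mobius {x y : ℝ} (hx : c * x + d ≠ 0) (hy : c * y + d ≠ 0) :
    (a * x + b) / (c * x + d) - (a * y + b) / (c * y + d)
      = (a * d - b * c) * (x - y) / ((c * x + d) * (c * y + d)) := by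
  rw [div_sub_div _ _ hx hy]
  ring

theorem mobius_monotoneOn_or_antitoneOn {s : Set ℝ} (hs : IsPreconnected s)
    (hden : ∀ x ∈ s, c * x + d ≠ 0) :
    MonotoneOn (fun x => (a * x + b) / (c * x + d)) s ∨
      AntitoneOn (fun x => (a * x + b) / (c * x + d)) s := by
  have hpos : ∀ x ∈ s, ∀ y ∈ s, 0 < (c * x + d) * (c * y + d) := fun x hx y hy =>
    hs.mul_pos_of_forall_ne_zero (by fun_prop) hden hx hy
  rcases le_total 0 (a * d - b * c) with hdet | hdet
  · refine .inl fun x hx y hy hxy => ?_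
    rw [← sub_nonneg, mobius_sub_mobius (hden y hy) (hden x hx)]
    exact div_nonneg (mul_nonneg hdet (sub_nonneg.2 hxy)) (hpos y hy x hx).le
  · refine .inr fun x hx y hy hxy => ?_
    rw [← sub_nonneg, mobius_sub_mobius (hden x hx) (hden y hy)]
    exact div_nonneg (mul_nonneg_of_nonpos_of_nonpos hdet (sub_nonpos.2 hxy)) (hpos x hx y hy).le

theorem mobius_mapsTo_uIcc {p q : ℝ} (hden : ∀ x ∈ uIcc p q, c * x + d ≠ 0) :
    MapsTo (fun x => (a * x + b) / (c * x + d)) (uIcc p q)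
      (uIcc ((a * p + b) / (c * p + d)) ((a * q + b) / (c * q + d))) :=
  (mobius_monotoneOn_or_antitoneOn isPreconnected_uIcc hden).elim
    MonotoneOn.mapsTo_uIcc AntitoneOn.mapsTo_uIcc

end Mobius

theorem uIcc_subset_digit_ranges {u v : ℝ} (hu : u ∈ Icc (-1 : ℝ) 1) (hv : v ∈ Icc (-1 : ℝ) 1)
    (huv : |u - v| < 1 / 3) :
    uIcc u v ⊆ Icc (-1) 0 ∨ uIcc u v ⊆ Icc 0 1 ∨ uIcc u v ⊆ Icc (-(1 / 3)) (1 / 3) := by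
  wlog hle : u ≤ v generalizing u v
  · rw [uIcc_comm]
    exact this hv hu (by rwa [abs_sub_comm]) (le_of_not_ge hle)
  rw [uIcc_of_le hle]
  rw [abs_sub_lt_iff] at huv
  rcases le_or_gt v 0 with hv0 | hv0
  · exact .inl (Icc_subset_Icc hu.1 hv0)
  rcases le_or_gt 0 u with hu0 | hu0
  · exact .inr (.inl (Icc_subset_Icc hu0 hv.2))
  · exact .inr (.inr (Icc_subset_Icc (by linarith) (by linarith)))

theorem Icc_subset_image_digitL : Icc (-1 : ℝ) 0 ⊆ digitL '' Icc (-1) 1 := by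
  rintro y ⟨hy₁, hy₂⟩
  have hpos : 0 < 1 - y := by linarith
  refine ⟨(3 * y + 1) / (1 - y), ⟨?_, ?_⟩, ?_⟩
  · rw [le_div_iff₀ hpos]; linarith
  · rw [div_le_iff₀ hpos]; linarith
  · simp only [digitL]
    field_simp
    ring

theorem Icc_subset_image_digitR : Icc (0 : ℝ) 1 ⊆ digitR '' Icc (-1) 1 := by
  rintro y ⟨hy₁, hy₂⟩
  have hpos : 0 < 1 + y := by linarith
  refine ⟨(3 * y - 1) / (1 + y), ⟨?_, ?_⟩, ?_⟩
  · rw [le_div_iff₀ hpos]; linarith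
  · rw [div_le_iff₀ hpos]; linarith
  · simp only [digitR]
    field_simp
    ring

theorem Icc_subset_image_digitM : Icc (-(1 / 3) : ℝ) (1 / 3) ⊆ digitM '' Icc (-1) 1 := by
  rintro y ⟨hy₁, hy₂⟩
  exact ⟨3 * y, ⟨by linarith, by linarith⟩, by simp only [digitM]; ring⟩

theorem small_diameter_emits (a b c d : ℝ)
    (hb : ∀ x ∈ Set.Icc (-1 : ℝ) 1, c * x + d ≠ 0)
    (hr : ∀ x ∈ Set.Icc (-1 : ℝ) 1, (a * x + b) / (c * x + d) ∈ Set.Icc (-1 : ℝ) 1)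
    (hdiam : |(a * (-1) + b) / (c * (-1) + d) - (a * 1 + b) / (c * 1 + d)| < 1 / 3) :
    ∃ φ ∈ ({digitL, digitR, digitM} : Set (ℝ → ℝ)),
      ∀ x ∈ Set.Icc (-1 : ℝ) 1, (a * x + b) / (c * x + d) ∈ φ '' Set.Icc (-1 : ℝ) 1 := by
  have hI : Icc (-1 : ℝ) 1 = uIcc (-1) 1 := (uIcc_of_le (by norm_num)).symm
  have hmaps := mobius_mapsTo_uIcc (a := a) (b := b) (hI ▸ hb)
  rw [← hI] at hmaps
  rcases uIcc_subset_digit_ranges (hr _ (left_mem_Icc.2 (by norm_num)))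
      (hr _ (right_mem_Icc.2 (by norm_num))) hdiam with h | h | h
  · exact ⟨digitL, by simp, fun x hx => Icc_subset_image_digitL (h (hmaps hx))⟩
  · exact ⟨digitR, by simp, fun x hx => Icc_subset_image_digitR (h (hmaps hx))⟩
  · exact ⟨digitM, by simp, fun x hx => Icc_subset_image_digitM (h (hmaps hx))⟩
end

section
/- Let α = (φ₀, φ₁, φ₂, ...) be an infinite sequence of digits from {L, R, M}, where L(x)=(x-1)/(x+3), R(x)=(x+1)/(-x+3), M(x)=x/3. For each k, let [l_k, u_k] = φ₀ ∘ φ₁ ∘ ... ∘ φ_{k-1}([-1,1]). Then for every k ≥ 0, u_k - l_k ≤ 2/(k+1). -/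
noncomputable def compStream (α : ℕ → ℝ → ℝ) : ℕ → ℝ → ℝ
  | 0 => id
  | k + 1 => compStream α k ∘ α k

lemma key_invariant (α : ℕ → ℝ → ℝ)
    (hα : ∀ i, α i = digitL ∨ α i = digitR ∨ α i = digitM) (k : ℕ) :
    ∃ a b c d : ℝ,
      (∀ x ∈ Set.Icc (-1 : ℝ) 1, compStream α k x = (a * x + b) / (c * x + d)) ∧
      0 < a * d - b * c ∧ 0 < d - c ∧ 0 < d + c ∧
      a * d - b * c ≤ (d - c) ^ 2 ∧ a * d - b * c ≤ (d + c) ^ 2 ∧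
      ((k : ℝ) + 1) * (a * d - b * c) ≤ (d - c) * (d + c) := by
  induction k with
  | zero =>
    refine ⟨1, 0, 0, 1, ?_, by norm_num, by norm_num, by norm_num, by norm_num,
      by norm_num, by norm_num⟩
    intro x hx
    simp [compStream]
  | succ k ih =>
    obtain ⟨a, b, c, d, hf, hΔ, hp, hq, hp2, hq2, hpq⟩ := ih
    have hk0 : (0 : ℝ) ≤ (k : ℝ) := Nat.cast_nonneg k
    have hΔpq : a * d - b * c ≤ (d - c) * (d + c) := by nlinarith
    have hden : ∀ y ∈ Set.Icc (-1 : ℝ) 1, 0 < c * y + d := by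
      intro y hy
      nlinarith [mul_nonneg (by linarith [hy.2] : (0:ℝ) ≤ 1 - y) hp.le,
        mul_nonneg (by linarith [hy.1] : (0:ℝ) ≤ 1 + y) hq.le]
    rcases hα k with hd | hd | hd
    · -- L case
      refine ⟨a + b, 3 * b - a, c + d, 3 * d - c, ?_, by nlinarith, by linarith,
        by linarith, by nlinarith, by nlinarith, ?_⟩
      · intro x hx
        have hx3 : (0 : ℝ) < x + 3 := by linarith [hx.1]
        have hy : digitL x ∈ Set.Icc (-1 : ℝ) 1 := by
          constructor
          · rw [digitL, le_div_iff₀ hx3]; linarith [hx.1]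
          · rw [digitL, div_le_one hx3]; linarith
        have h1 : compStream α (k + 1) x = compStream α k (α k x) := rfl
        rw [h1, hd, hf _ hy]
        have hcy : 0 < c * digitL x + d := hden _ hy
        rw [digitL] at hcy ⊢
        have hd2 : (0:ℝ) < (c + d) * x + (3 * d - c) := by
          nlinarith [mul_nonneg (by linarith [hx.1] : (0:ℝ) ≤ 1 + x) hq.le]
        rw [div_eq_div_iff hcy.ne' hd2.ne']
        field_simp
        ring
      · push_cast
        nlinarith
    · -- R case
      refine ⟨a - b, a + 3 * b, c - d, c + 3 * d, ?_, by nlinarith, by linarith,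
        by nlinarith, by nlinarith, by nlinarith, ?_⟩
      · intro x hx
        have hx3 : (0 : ℝ) < -x + 3 := by linarith [hx.2]
        have hy : digitR x ∈ Set.Icc (-1 : ℝ) 1 := by
          constructor
          · rw [digitR, le_div_iff₀ hx3]; linarith
          · rw [digitR, div_le_one hx3]; linarith [hx.2]
        have h1 : compStream α (k + 1) x = compStream α k (α k x) := rfl
        rw [h1, hd, hf _ hy]
        have hcy : 0 < c * digitR x + d := hden _ hy
        rw [digitR] at hcy ⊢
        have hd2 : (0:ℝ) < (c - d) * x + (c + 3 * d) := by
          nlinarith [mul_nonneg (by linarith [hx.2] : (0:ℝ) ≤ 1 - x) hp.le]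
        rw [div_eq_div_iff hcy.ne' hd2.ne']
        field_simp
        ring
      · push_cast
        nlinarith
    · -- M case
      refine ⟨a, 3 * b, c, 3 * d, ?_, by nlinarith, by linarith, by linarith,
        by nlinarith, by nlinarith, ?_⟩
      · intro x hx
        have hy : digitM x ∈ Set.Icc (-1 : ℝ) 1 := by
          constructor
          · rw [digitM]; linarith [hx.1]
          · rw [digitM]; linarith [hx.2]
        have h1 : compStream α (k + 1) x = compStream α k (α k x) := rfl
        rw [h1, hd, hf _ hy]
        have hcy : 0 < c * digitM x + d := hden _ hy
        rw [digitM] at hcy ⊢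
        have hd2 : (0:ℝ) < c * x + 3 * d := by linarith [hden x hx]
        rw [div_eq_div_iff hcy.ne' hd2.ne']
        ring
      · push_cast
        nlinarith

theorem interval_shrinks (α : ℕ → ℝ → ℝ)
    (hα : ∀ i, α i = digitL ∨ α i = digitR ∨ α i = digitM)
    (k : ℕ) (l u : ℝ)
    (h : compStream α k '' Set.Icc (-1 : ℝ) 1 = Set.Icc l u) :
    u - l ≤ 2 / (k + 1) := by
  obtain ⟨a, b, c, d, hf, hΔ, hp, hq, hp2, hq2, hpq⟩ := key_invariant α hα k
  set g : ℝ → ℝ := fun x => (a * x + b) / (c * x + d) with hg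
  have hden : ∀ y ∈ Set.Icc (-1 : ℝ) 1, 0 < c * y + d := by
    intro y hy
    nlinarith [mul_nonneg (by linarith [hy.2] : (0:ℝ) ≤ 1 - y) hp.le,
      mul_nonneg (by linarith [hy.1] : (0:ℝ) ≤ 1 + y) hq.le]
  have hmono : MonotoneOn g (Set.Icc (-1 : ℝ) 1) := by
    intro x hx y hy hxy
    have h1 := hden x hx
    have h2 := hden y hy
    rw [hg]
    simp only
    rw [div_le_div_iff₀ h1 h2]
    nlinarith [mul_nonneg hΔ.le (sub_nonneg.2 hxy)]
  have hcont : ContinuousOn g (Set.Icc (-1 : ℝ) 1) := by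
    apply ContinuousOn.div
    · exact (continuous_const.mul continuous_id').add continuous_const |>.continuousOn
    · exact (continuous_const.mul continuous_id').add continuous_const |>.continuousOn
    · exact fun x hx => (hden x hx).ne'
  have himg : g '' Set.Icc (-1 : ℝ) 1 = Set.Icc (g (-1)) (g 1) := by
    apply Set.Subset.antisymm
    · rintro _ ⟨x, hx, rfl⟩
      exact ⟨hmono (by norm_num) hx hx.1, hmono hx (by norm_num) hx.2⟩
    · exact intermediate_value_Icc (by norm_num) hcont
  have himg2 : compStream α k '' Set.Icc (-1 : ℝ) 1 = g '' Set.Icc (-1 : ℝ) 1 :=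
    Set.image_congr hf
  have heq : Set.Icc l u = Set.Icc (g (-1)) (g 1) := by
    rw [← himg, ← himg2, h]
  have hne : g (-1) ≤ g 1 := hmono (by norm_num) (by norm_num) (by norm_num)
  have hgm1 : g (-1) ∈ Set.Icc l u := by rw [heq]; exact ⟨le_refl _, hne⟩
  have hlu : l ≤ u := le_trans hgm1.1 hgm1.2
  have hu : u ∈ Set.Icc (g (-1)) (g 1) := by rw [← heq]; exact ⟨hlu, le_refl _⟩
  have hl : l ∈ Set.Icc (g (-1)) (g 1) := by rw [← heq]; exact ⟨le_refl _, hlu⟩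
  have hbound : u - l ≤ g 1 - g (-1) := by linarith [hu.2, hl.1]
  have hg1 : g 1 - g (-1) = 2 * (a * d - b * c) / ((d + c) * (d - c)) := by
    rw [hg]
    simp only
    rw [div_sub_div _ _ (by linarith : c * 1 + d ≠ 0) (by nlinarith : c * (-1) + d ≠ 0)]
    rw [div_eq_div_iff (by nlinarith : (c * 1 + d) * (c * (-1) + d) ≠ 0)
      (by nlinarith [mul_pos hq hp] : (d + c) * (d - c) ≠ 0)]
    ring
  have hk1 : (0 : ℝ) < (k : ℝ) + 1 := by positivity
  have hfinal : 2 * (a * d - b * c) / ((d + c) * (d - c)) ≤ 2 / ((k : ℝ) + 1) := by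
    rw [div_le_div_iff₀ (mul_pos hq hp) hk1]
    nlinarith
  calc u - l ≤ g 1 - g (-1) := hbound
    _ = 2 * (a * d - b * c) / ((d + c) * (d - c)) := hg1
    _ ≤ 2 / ((k : ℝ) + 1) := hfinal
end

section
/- Let ξ be a refining quadratic map and let φ ∈ {L, R, M} be a digit with nonzero determinant. If ξ([-1,1], [-1,1]) ⊆ φ([-1,1]), then the composed quadratic map φ⁻¹ ∘ ξ is refining: it maps [-1,1]×[-1,1] into [-1,1] with nonvanishing denominator. -/
/-! Writing `ξ x y = φ t` with `t ∈ [-1, 1]`, the inverse Möbius map sends `φ t` back to `t`: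
its denominator at `φ t` is `det φ / (r t + s)`, which is nonzero because digits have positive
denominators on `[-1, 1]`. -/

section Mobius

variable {p q r s t : ℝ}

lemma mobius_inv_denom_eq (hden : r * t + s ≠ 0) :
    -r * ((p * t + q) / (r * t + s)) + p = (p * s - q * r) / (r * t + s) := by
  field_simp
  ring

lemma mobius_inv_num_eq (hden : r * t + s ≠ 0) :
    s * ((p * t + q) / (r * t + s)) - q = (p * s - q * r) * t / (r * t + s) := by
  rw [eq_div_iff hden, sub_mul, mul_assoc, div_mul_cancel₀ _ hden]
  ring

lemma mobius_inv_denom_ne_zero (hdet : p * s - q * r ≠ 0) (hden : r * t + s ≠ 0) :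
    -r * ((p * t + q) / (r * t + s)) + p ≠ 0 := by
  rw [mobius_inv_denom_eq hden]
  exact div_ne_zero hdet hden

lemma mobius_inv_apply_mobius (hdet : p * s - q * r ≠ 0) (hden : r * t + s ≠ 0) :
    (s * ((p * t + q) / (r * t + s)) - q) / (-r * ((p * t + q) / (r * t + s)) + p) = t := by
  rw [mobius_inv_num_eq hden, mobius_inv_denom_eq hden]
  field_simp

lemma digit_denom_pos
    (hφ : (p, q, r, s) = ((1 : ℝ), -1, 1, 3) ∨
          (p, q, r, s) = ((1 : ℝ), 1, -1, 3) ∨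
          (p, q, r, s) = ((1 : ℝ), 0, 0, 3))
    (ht : t ∈ Set.Icc (-1 : ℝ) 1) : 0 < r * t + s := by
  obtain ⟨ht₁, ht₂⟩ := ht
  rcases hφ with hc | hc | hc <;>
    simp only [Prod.mk.injEq] at hc <;>
    obtain ⟨rfl, rfl, rfl, rfl⟩ := hc <;>
    linarith

end Mobius

theorem inv_comp_quadratic_refining_general (ξ : ℝ → ℝ → ℝ)
    (p q r s : ℝ)
    (hφ : (p, q, r, s) = ((1 : ℝ), -1, 1, 3) ∨
          (p, q, r, s) = ((1 : ℝ), 1, -1, 3) ∨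
          (p, q, r, s) = ((1 : ℝ), 0, 0, 3))
    (hdet : p * s - q * r ≠ 0)
    (hincl : ∀ x ∈ Set.Icc (-1 : ℝ) 1, ∀ y ∈ Set.Icc (-1 : ℝ) 1,
      ξ x y ∈ (fun t => (p * t + q) / (r * t + s)) '' Set.Icc (-1 : ℝ) 1) :
    ∀ x ∈ Set.Icc (-1 : ℝ) 1, ∀ y ∈ Set.Icc (-1 : ℝ) 1,
      -r * ξ x y + p ≠ 0 ∧
      (s * ξ x y - q) / (-r * ξ x y + p) ∈ Set.Icc (-1 : ℝ) 1 := by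
  intro x hx y hy
  obtain ⟨t, ht, hξt⟩ := hincl x hx y hy
  have hden : r * t + s ≠ 0 := (digit_denom_pos hφ ht).ne'
  rw [← hξt]
  exact ⟨mobius_inv_denom_ne_zero hdet hden, (mobius_inv_apply_mobius hdet hden).symm ▸ ht⟩

theorem inv_comp_quadratic_refining (a b c d e f g h : ℝ) (ξ : ℝ → ℝ → ℝ)
    (hξ : ξ = fun x y =>
      (a * x * y + b * x + c * y + d) / (e * x * y + f * x + g * y + h))
    (hbnd : ∀ x ∈ Set.Icc (-1 : ℝ) 1, ∀ y ∈ Set.Icc (-1 : ℝ) 1,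
      e * x * y + f * x + g * y + h ≠ 0)
    (href : ∀ x ∈ Set.Icc (-1 : ℝ) 1, ∀ y ∈ Set.Icc (-1 : ℝ) 1,
      ξ x y ∈ Set.Icc (-1 : ℝ) 1)
    (p q r s : ℝ)
    (hφ : (p, q, r, s) = ((1 : ℝ), -1, 1, 3) ∨
          (p, q, r, s) = ((1 : ℝ), 1, -1, 3) ∨
          (p, q, r, s) = ((1 : ℝ), 0, 0, 3))
    (hdet : p * s - q * r ≠ 0)
    (hincl : ∀ x ∈ Set.Icc (-1 : ℝ) 1, ∀ y ∈ Set.Icc (-1 : ℝ) 1,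
      ξ x y ∈ (fun t => (p * t + q) / (r * t + s)) '' Set.Icc (-1 : ℝ) 1) :
    ∀ x ∈ Set.Icc (-1 : ℝ) 1, ∀ y ∈ Set.Icc (-1 : ℝ) 1,
      -r * ξ x y + p ≠ 0 ∧
      (s * ξ x y - q) / (-r * ξ x y + p) ∈ Set.Icc (-1 : ℝ) 1 :=
  inv_comp_quadratic_refining_general ξ p q r s hφ hdet hincl
end
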